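/- Let g, h : 2^E → ℝ≥0 be monotone and gross substitute with g(∅) = h(∅) = 0, and consider any double-greedy run for g and h. Then for every k ∈ {0, 1, …, n} and every S ⊆ E with |S| ≤ |H_k|, f(H_k) = h(H_k) + g(E \ H_k) ≥ h(S). -/

import Mathlib

namespace IncDec

open Finset

variable {α : Type*} [Fintype α] [DecidableEq α]

/-- Marginal gain `F(x | S) = F(S ∪ {x}) - F(S)`. -/
def marg (F : Finset α → ℝ) (x : α) (S : Finset α) : ℝ := F (insert x S) - F S

/-- Marginal gain of a set: `F(T | S) = F(T ∪ S) - F(S)`. -/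
def margSet (F : Finset α → ℝ) (T S : Finset α) : ℝ := F (T ∪ S) - F S

/-- Monotone set function. -/
def Mono (F : Finset α → ℝ) : Prop := ∀ ⦃S T : Finset α⦄, S ⊆ T → F S ≤ F T

/-- Nonnegative set function. -/
def Nonneg (F : Finset α → ℝ) : Prop := ∀ S : Finset α, 0 ≤ F S

/-- The combined objective `f(S) = h(S) + g(E \ S)`. -/
def fObj (g h : Finset α → ℝ) (S : Finset α) : ℝ := h S + g Sᶜ

/-- `F` has generic submodularity ratio at least `γ`. -/
def GenSubRatioGE (F : Finset α → ℝ) (γ : ℝ) : Prop :=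
  ∀ A B : Finset α, ∀ e : α, marg F e A ≥ γ * marg F e (A ∪ B)

/-- `F` has curvature at most `c`. -/
def CurvatureLE (F : Finset α → ℝ) (c : ℝ) : Prop :=
  ∀ A B : Finset α, ∀ e : α, e ∉ B → marg F e (A ∪ B) ≥ (1 - c) * marg F e A

/-- Submodular set function. -/
def Submodular (F : Finset α → ℝ) : Prop :=
  ∀ ⦃S T : Finset α⦄, S ⊆ T → ∀ e : α, e ∉ T → marg F e T ≤ marg F e S

/-- Modular set function. -/
def Modular (F : Finset α → ℝ) : Prop := ∀ S : Finset α, F S = ∑ e ∈ S, F {e}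

/-- Gross substitute set function. -/
def GrossSubstitute (F : Finset α → ℝ) : Prop :=
  Submodular F ∧
    ∀ A B : Finset α, Disjoint A B → 2 ≤ B.card → ∀ b ∈ B,
      ∃ b' ∈ B.erase b,
        marg F b A + margSet F (B.erase b) A ≤ marg F b' A + margSet F (B.erase b') A

/-- The set of ratios appearing in the definition of the curvature. -/
def curvRatioSet (F : Finset α → ℝ) : Set ℝ :=
  {r | ∃ A B : Finset α, ∃ e : α, e ∉ B ∧ 0 < marg F e A ∧ r = marg F e (A ∪ B) / marg F e A}

/-- `F` has curvature exactly `c` (with `min ∅ := 1`, i.e. `c = 0` if the ratio set is empty). -/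
def CurvatureEq (F : Finset α → ℝ) (c : ℝ) : Prop :=
  (¬ (curvRatioSet F).Nonempty ∧ c = 0) ∨ IsLeast (curvRatioSet F) (1 - c)

/-- The set of ratios appearing in the definition of the generic submodularity ratio. -/
def gsRatioSet (F : Finset α → ℝ) : Set ℝ :=
  {r | ∃ A B : Finset α, ∃ e : α, 0 < marg F e (A ∪ B) ∧ r = marg F e A / marg F e (A ∪ B)}

/-- `F` has generic submodularity ratio exactly `γ` (with `min ∅ := 1`). -/
def GenSubRatioEq (F : Finset α → ℝ) (γ : ℝ) : Prop :=
  (¬ (gsRatioSet F).Nonempty ∧ γ = 1) ∨ IsLeast (gsRatioSet F) γ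

/-- The singleton-based ratio set `{F(e | E \ {e}) / F({e}) : e ∈ E, F({e}) > 0}`. -/
def curvSingletonSet (F : Finset α → ℝ) : Set ℝ :=
  {r | ∃ e : α, 0 < F {e} ∧ r = marg F e ({e}ᶜ) / F {e}}

/-- A run of the double-greedy algorithm for `g` and `h`: distinct elements `elt 0, …,
`elt (n-1)` enumerating `E` (`elt i` is the element `e*_{i+1}` of the paper), together with the
sets `H i`, `G i` (for `0 ≤ i ≤ n`), each new element maximizing the larger marginal gain and
being added to the side realizing it. -/
structure DGRun (α : Type*) [Fintype α] [DecidableEq α] (g h : Finset α → ℝ) where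
  elt : ℕ → α
  H : ℕ → Finset α
  G : ℕ → Finset α
  H0 : H 0 = ∅
  G0 : G 0 = ∅
  mem : ∀ i < Fintype.card α, elt i ∉ H i ∪ G i
  distinct : ∀ i < Fintype.card α, ∀ j < Fintype.card α, elt i = elt j → i = j
  enum : ∀ x : α, ∃ i < Fintype.card α, elt i = x
  greedy : ∀ i < Fintype.card α, ∀ x : α, x ∉ H i ∪ G i →
      max (marg g x (G i)) (marg h x (H i)) ≤ max (marg g (elt i) (G i)) (marg h (elt i) (H i))
  step : ∀ i < Fintype.card α,
      (H (i + 1) = insert (elt i) (H i) ∧ G (i + 1) = G i ∧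
        marg g (elt i) (G i) ≤ marg h (elt i) (H i)) ∨
      (G (i + 1) = insert (elt i) (G i) ∧ H (i + 1) = H i ∧
        marg h (elt i) (H i) ≤ marg g (elt i) (G i))

/-- `phi R i` is the increment `φ_{i+1}` of the double-greedy run `R`. -/
def phi {g h : Finset α → ℝ} (R : DGRun α g h) (i : ℕ) : ℝ :=
  max (marg g (R.elt i) (R.G i)) (marg h (R.elt i) (R.H i))

/-! The increments `phi R i` add up to `h (H k) + g (G k) ≤ fObj g h (H k)`. For the bound
on `h S`, downward induction on `i ≤ k` shows that every `T ⊇ H i` avoiding `G i` with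
`#T ≤ #(H k)` has `h T ≤ h (H i) + ∑_{i ≤ j < k} phi R j`. If `elt i` goes to `G`, it is
removed from `T` at cost `marg h (elt i) (H i) ≤ phi R i` by submodularity. If it goes to `H`,
the gross substitute exchange property, together with the greedy choice of `elt i`, lets it
replace some element of `T \ H i` without decreasing `h`. -/

omit [Fintype α] in
lemma marg_nonneg {F : Finset α → ℝ} (hF : Mono F) (x : α) (S : Finset α) :
    0 ≤ marg F x S :=
  sub_nonneg.2 (hF (subset_insert _ _))

omit [Fintype α] in
lemma Submodular.le_erase_add_marg {F : Finset α → ℝ} (hF : Submodular F) {A T : Finset α}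
    {e : α} (he : e ∈ T) (hAT : A ⊆ T.erase e) :
    F T ≤ F (T.erase e) + marg F e A := by
  have hmarg := hF hAT e (notMem_erase e T)
  rw [marg, insert_erase he] at hmarg
  linarith

omit [Fintype α] in
lemma GrossSubstitute.exists_le_insert_erase {F : Finset α → ℝ} (hF : GrossSubstitute F)
    {A T : Finset α} {e : α} (hAT : A ⊂ T) (heT : e ∉ T)
    (hmax : ∀ x ∈ T \ A, marg F x A ≤ marg F e A) :
    ∃ b ∈ T \ A, F T ≤ F (insert e (T.erase b)) := by
  have heTA : e ∉ T \ A := fun he => heT (mem_sdiff.1 he).1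
  have hdisj : Disjoint A (insert e (T \ A)) :=
    disjoint_insert_right.2 ⟨fun he => heT (hAT.subset he), disjoint_sdiff⟩
  have hcard : 2 ≤ #(insert e (T \ A)) := by
    rw [card_insert_of_notMem heTA]
    have := card_pos.2 (sdiff_nonempty.2 (not_subset_of_ssubset hAT))
    omega
  obtain ⟨b, hb, hexch⟩ := hF.2 A _ hdisj hcard e (mem_insert_self _ _)
  rw [erase_insert heTA] at hb hexch
  refine ⟨b, hb, ?_⟩
  have hT : T \ A ∪ A = T := sdiff_union_of_subset hAT.subset
  have hswap : (insert e (T \ A)).erase b ∪ A = insert e (T.erase b) := by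
    have hbe : b ≠ e := fun h => heTA (h ▸ hb)
    have hbA := (mem_sdiff.1 hb).2
    have hAT' := hAT.subset
    ext x
    simp only [mem_union, mem_erase, mem_insert, mem_sdiff]
    grind
  have hb_le := hmax b hb
  simp only [margSet, hT, hswap] at hexch
  linarith

namespace DGRun

variable {g h : Finset α → ℝ} (R : DGRun α g h)

lemma disjoint_H_G {i : ℕ} (hi : i ≤ Fintype.card α) : Disjoint (R.H i) (R.G i) := by
  induction i with
  | zero => simp [R.H0, R.G0]
  | succ i ih =>
    have hi' : i < Fintype.card α := hi
    have he := R.mem i hi'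
    rw [mem_union, not_or] at he
    rcases R.step i hi' with ⟨hH, hG, -⟩ | ⟨hG, hH, -⟩ <;> rw [hH, hG]
    · exact disjoint_insert_left.2 ⟨he.2, ih hi'.le⟩
    · exact disjoint_insert_right.2 ⟨he.1, ih hi'.le⟩

lemma h_H_add_g_G_eq_sum_phi (hge : g ∅ = 0) (hhe : h ∅ = 0) {i : ℕ}
    (hi : i ≤ Fintype.card α) :
    h (R.H i) + g (R.G i) = ∑ j ∈ range i, phi R j := by
  induction i with
  | zero => simp [R.H0, R.G0, hge, hhe]
  | succ i ih =>
    have hi' : i < Fintype.card α := hi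
    rw [sum_range_succ, ← ih hi'.le]
    rcases R.step i hi' with ⟨hH, hG, hle⟩ | ⟨hG, hH, hle⟩
    · rw [hH, hG, phi, max_eq_right hle, marg]; ring
    · rw [hG, hH, phi, max_eq_left hle, marg]; ring

lemma marg_h_le_phi (i : ℕ) : marg h (R.elt i) (R.H i) ≤ phi R i :=
  le_max_right (marg g (R.elt i) (R.G i)) _

lemma marg_h_le_phi_of_notMem {i : ℕ} (hi : i < Fintype.card α) {x : α}
    (hx : x ∉ R.H i ∪ R.G i) : marg h x (R.H i) ≤ phi R i :=
  (le_max_right (marg g x (R.G i)) _).trans (R.greedy i hi x hx)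

lemma phi_nonneg (hhm : Mono h) (i : ℕ) : 0 ≤ phi R i :=
  (marg_nonneg hhm _ _).trans (R.marg_h_le_phi i)

lemma exists_le_insert_elt_erase (hhs : GrossSubstitute h) {i : ℕ} (hi : i < Fintype.card α)
    (hle : marg g (R.elt i) (R.G i) ≤ marg h (R.elt i) (R.H i)) {T : Finset α}
    (hHT : R.H i ⊂ T) (hTG : Disjoint T (R.G i)) (heT : R.elt i ∉ T) :
    ∃ b ∈ T \ R.H i, h T ≤ h (insert (R.elt i) (T.erase b)) := by
  refine hhs.exists_le_insert_erase hHT heT fun x hx => ?_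
  rw [mem_sdiff] at hx
  have hx' : x ∉ R.H i ∪ R.G i := by
    rw [mem_union, not_or]
    exact ⟨hx.2, disjoint_left.1 hTG hx.1⟩
  exact (max_eq_right hle).symm ▸ R.marg_h_le_phi_of_notMem hi hx'

lemma h_le_h_H_add_sum_phi (hhm : Mono h) (hhs : GrossSubstitute h) {k : ℕ}
    (hk : k ≤ Fintype.card α) {i : ℕ} (hik : i ≤ k) :
    ∀ T, R.H i ⊆ T → Disjoint T (R.G i) → #T ≤ #(R.H k) →
      h T ≤ h (R.H i) + ∑ j ∈ Ico i k, phi R j := by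
  induction hik using Nat.decreasingInduction with
  | self =>
    intro T hHT _ hT
    simp [eq_of_subset_of_card_le hHT hT]
  | of_succ i hik ih =>
    intro T hHT hTG hT
    have hi : i < Fintype.card α := hik.trans_le hk
    have he := R.mem i hi
    rw [mem_union, not_or] at he
    have htail := sum_nonneg fun j (_ : j ∈ Ico (i + 1) k) => R.phi_nonneg hhm j
    rw [sum_eq_sum_Ico_succ_bot hik, ← add_assoc]
    rcases R.step i hi with ⟨hH, hG, hle⟩ | ⟨hG, hH, -⟩ <;> rw [hH, hG] at ih
    · rw [phi, max_eq_right hle, marg, add_sub_cancel]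
      by_cases heT : R.elt i ∈ T
      · exact ih T (insert_subset heT hHT) hTG hT
      rcases hHT.eq_or_ssubset with rfl | hHT
      · linarith [hhm (subset_insert (R.elt i) (R.H i))]
      obtain ⟨b, hb, hTb⟩ := R.exists_le_insert_elt_erase hhs hi hle hHT hTG heT
      rw [mem_sdiff] at hb
      refine hTb.trans (ih _ ?_ ?_ ?_)
      · exact insert_subset_insert _ (subset_erase.2 ⟨hHT.subset, hb.2⟩)
      · exact disjoint_insert_left.2 ⟨he.2, disjoint_of_subset_left (erase_subset _ _) hTG⟩
      · rwa [card_insert_of_notMem fun h => heT (mem_of_mem_erase h), card_erase_add_one hb.1]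
    · by_cases heT : R.elt i ∈ T
      · have hHTe : R.H i ⊆ T.erase (R.elt i) := subset_erase.2 ⟨hHT, he.1⟩
        have hTe := hhs.1.le_erase_add_marg heT hHTe
        have hTeG : Disjoint (T.erase (R.elt i)) (insert (R.elt i) (R.G i)) :=
          disjoint_insert_right.2
            ⟨notMem_erase _ _, disjoint_of_subset_left (erase_subset _ _) hTG⟩
        have := ih (T.erase (R.elt i)) hHTe hTeG (card_erase_le.trans hT)
        linarith [R.marg_h_le_phi i]
      · linarith [ih T hHT (disjoint_insert_right.2 ⟨heT, hTG⟩) hT, R.phi_nonneg hhm i]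

lemma h_le_sum_phi (hhm : Mono h) (hhe : h ∅ = 0) (hhs : GrossSubstitute h) {k : ℕ}
    (hk : k ≤ Fintype.card α) {S : Finset α} (hS : #S ≤ #(R.H k)) :
    h S ≤ ∑ j ∈ range k, phi R j := by
  have := R.h_le_h_H_add_sum_phi hhm hhs hk k.zero_le S (by simp [R.H0]) (by simp [R.G0]) hS
  rwa [R.H0, hhe, zero_add, ← range_eq_Ico] at this

end DGRun

theorem stmt19_general (g h : Finset α → ℝ)
    (hgm : Mono g) (hhm : Mono h)
    (hge : g ∅ = 0) (hhe : h ∅ = 0)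
    (hhs : GrossSubstitute h)
    (R : DGRun α g h) :
    ∀ k ≤ Fintype.card α, ∀ S : Finset α, S.card ≤ (R.H k).card →
      fObj g h (R.H k) = h (R.H k) + g ((R.H k)ᶜ) ∧ fObj g h (R.H k) ≥ h S := by
  intro k hk S hS
  refine ⟨rfl, ?_⟩
  have hGc : R.G k ⊆ (R.H k)ᶜ := subset_compl_iff_disjoint_left.2 (R.disjoint_H_G hk)
  calc h S ≤ ∑ j ∈ range k, phi R j := R.h_le_sum_phi hhm hhe hhs hk hS
    _ = h (R.H k) + g (R.G k) := (R.h_H_add_g_G_eq_sum_phi hge hhe hk).symm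
    _ ≤ fObj g h (R.H k) := add_le_add_right (hgm hGc) _

theorem stmt19 (g h : Finset α → ℝ)
    (hgm : Mono g) (hhm : Mono h) (hg0 : Nonneg g) (hh0 : Nonneg h)
    (hge : g ∅ = 0) (hhe : h ∅ = 0)
    (hgs : GrossSubstitute g) (hhs : GrossSubstitute h)
    (R : DGRun α g h) :
    ∀ k ≤ Fintype.card α, ∀ S : Finset α, S.card ≤ (R.H k).card →
      fObj g h (R.H k) = h (R.H k) + g ((R.H k)ᶜ) ∧ fObj g h (R.H k) ≥ h S :=
  stmt19_general g h hgm hhm hge hhe hhs R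

end IncDec
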